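/- arXiv:2501.07364 — 2 statements merged into one kernel-verified Lean document; each statement's English description precedes it below -/
import Mathlib

section
/- Define a sequence of polynomials f_n ∈ ℝ[t] by f_0 = 0, f_1 = 1 + t, and f_{n+1} = (1+t)·f_n + (c_{n+1} - 1)·t·f_{n-1} for n ≥ 1, where each c_i is a positive integer. Then for every n ≥ 1 the polynomial f_n is real-rooted, and moreover f_n interlaces f_{n+1}. -/
open Polynomial

attribute [local instance] Classical.propDecidable

/-- A real polynomial is real-rooted if it is nonzero and all of its complex
zeros are real, i.e. the number of real roots (with multiplicity) equals the degree. -/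
def RealRooted (f : Polynomial ℝ) : Prop :=
  f ≠ 0 ∧ f.roots.card = f.natDegree

/-- The list of real roots of `f`, with multiplicity, in decreasing order. -/
noncomputable def sortedRootsDesc (f : Polynomial ℝ) : List ℝ :=
  (f.roots.sort (· ≤ ·)).reverse

/-- `Interlaces f g` means: `f` and `g` are real-rooted with positive leading
coefficients, `deg g` is `deg f` or `deg f + 1`, and listing the zeros
`α₁ ≥ α₂ ≥ ⋯` of `f` and `β₁ ≥ β₂ ≥ ⋯` of `g`, one has
`⋯ ≤ α₂ ≤ β₂ ≤ α₁ ≤ β₁`. -/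
def Interlaces (f g : Polynomial ℝ) : Prop :=
  RealRooted f ∧ RealRooted g ∧ 0 < f.leadingCoeff ∧ 0 < g.leadingCoeff ∧
  (g.natDegree = f.natDegree ∨ g.natDegree = f.natDegree + 1) ∧
  (∀ i (hf : i < (sortedRootsDesc f).length) (hg : i < (sortedRootsDesc g).length),
     (sortedRootsDesc f).get ⟨i, hf⟩ ≤ (sortedRootsDesc g).get ⟨i, hg⟩) ∧
  (∀ i (hf : i < (sortedRootsDesc f).length) (hg : i + 1 < (sortedRootsDesc g).length),
     (sortedRootsDesc g).get ⟨i + 1, hg⟩ ≤ (sortedRootsDesc f).get ⟨i, hf⟩)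

noncomputable def cnt (f : Polynomial ℝ) (x : ℝ) : ℕ :=
  Multiset.countP (fun s => x < s) f.roots

lemma key_sorted (x : ℝ) : ∀ (L : List ℝ), L.Pairwise (· ≥ ·) →
    ∀ i (hi : i < L.length),
    (x < L.get ⟨i, hi⟩ ↔ i < Multiset.countP (fun s => x < s) (↑L : Multiset ℝ)) := by
  intro L
  induction L with
  | nil => intro _ i hi; simp at hi
  | cons a L ih =>
    intro hs i hi
    rw [List.pairwise_cons] at hs
    have hcoe : ((a :: L : List ℝ) : Multiset ℝ) = a ::ₘ (↑L : Multiset ℝ) := rfl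
    rw [hcoe, Multiset.countP_cons]
    match i with
    | 0 =>
      simp only [List.get]
      constructor
      · intro h
        simp [h]
      · intro h
        by_contra hxa
        have hz : Multiset.countP (fun s => x < s) (↑L : Multiset ℝ) = 0 := by
          rw [Multiset.countP_eq_zero]
          intro b hb
          have : b ≤ a := hs.1 b (by exact_mod_cast hb)
          push_neg at hxa
          exact not_lt.2 (this.trans hxa)
        rw [hz] at h
        simp [hxa] at h
    | j + 1 =>
      have hj : j < L.length := Nat.lt_of_succ_lt_succ hi
      have hg : (a :: L).get ⟨j + 1, hi⟩ = L.get ⟨j, hj⟩ := rfl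
      rw [hg]
      by_cases hxa : x < a
      · rw [if_pos hxa]
        rw [ih hs.2 j hj]
        omega
      · rw [if_neg hxa]
        have hz : Multiset.countP (fun s => x < s) (↑L : Multiset ℝ) = 0 := by
          rw [Multiset.countP_eq_zero]
          intro b hb
          have : b ≤ a := hs.1 b (by exact_mod_cast hb)
          push_neg at hxa
          exact not_lt.2 (this.trans hxa)
        rw [hz]
        constructor
        · intro h
          exfalso
          have : L.get ⟨j, hj⟩ ≤ a := hs.1 _ (L.get_mem _)
          push_neg at hxa
          exact absurd (h.trans_le (this.trans hxa)) (lt_irrefl x)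
        · omega

lemma sortedRootsDesc_sorted (f : Polynomial ℝ) : (sortedRootsDesc f).Pairwise (· ≥ ·) := by
  unfold sortedRootsDesc
  rw [List.pairwise_reverse]
  exact Multiset.pairwise_sort f.roots (· ≤ ·)

lemma coe_sortedRootsDesc (f : Polynomial ℝ) :
    ((sortedRootsDesc f : List ℝ) : Multiset ℝ) = f.roots := by
  unfold sortedRootsDesc
  rw [Multiset.coe_reverse, Multiset.sort_eq]

lemma length_sortedRootsDesc (f : Polynomial ℝ) :
    (sortedRootsDesc f).length = Multiset.card f.roots := by
  rw [← coe_sortedRootsDesc f]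
  rfl

lemma key (f : Polynomial ℝ) (x : ℝ) (i : ℕ) (hi : i < (sortedRootsDesc f).length) :
    x < (sortedRootsDesc f).get ⟨i, hi⟩ ↔ i < cnt f x := by
  rw [key_sorted x _ (sortedRootsDesc_sorted f) i hi, coe_sortedRootsDesc]
  rfl

lemma cnt_le_card (f : Polynomial ℝ) (x : ℝ) : cnt f x ≤ Multiset.card f.roots :=
  Multiset.countP_le_card _ _

lemma interlaces_of_cnt (f g : Polynomial ℝ) (hf : RealRooted f) (hg : RealRooted g)
    (hlf : 0 < f.leadingCoeff) (hlg : 0 < g.leadingCoeff)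
    (hdeg : g.natDegree = f.natDegree ∨ g.natDegree = f.natDegree + 1)
    (h1 : ∀ x, cnt f x ≤ cnt g x) (h2 : ∀ x, cnt g x ≤ cnt f x + 1) :
    Interlaces f g := by
  refine ⟨hf, hg, hlf, hlg, hdeg, ?_, ?_⟩
  · intro i hif hig
    by_contra hcon
    push_neg at hcon
    set x := (sortedRootsDesc g).get ⟨i, hig⟩ with hx
    have h3 : i < cnt f x := (key f x i hif).1 hcon
    have h4 : i < cnt g x := lt_of_lt_of_le h3 (h1 x)
    exact absurd ((key g x i hig).2 h4) (lt_irrefl x)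
  · intro i hif hig
    by_contra hcon
    push_neg at hcon
    set x := (sortedRootsDesc f).get ⟨i, hif⟩ with hx
    have h3 : i + 1 < cnt g x := (key g x (i+1) hig).1 hcon
    have h4 : i < cnt f x := by have := h2 x; omega
    exact absurd ((key f x i hif).2 h4) (lt_irrefl x)

lemma prod_map_neg (f : ℝ → ℝ) : ∀ (S : Multiset ℝ), (∀ a ∈ S, f a < 0) →
    0 < (-1 : ℝ)^(Multiset.card S) * (S.map f).prod := by
  intro S
  induction S using Multiset.induction with
  | empty => intro _; simp
  | cons a S ih =>
    intro h
    have ha : f a < 0 := h a (Multiset.mem_cons_self a S)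
    have hS : 0 < (-1 : ℝ)^(Multiset.card S) * (S.map f).prod :=
      ih fun b hb => h b (Multiset.mem_cons_of_mem hb)
    rw [Multiset.map_cons, Multiset.prod_cons, Multiset.card_cons, pow_succ]
    nlinarith [hS, ha]

lemma prod_map_pos (f : ℝ → ℝ) : ∀ (S : Multiset ℝ), (∀ a ∈ S, 0 < f a) →
    0 < (S.map f).prod := by
  intro S
  induction S using Multiset.induction with
  | empty => intro _; simp
  | cons a S ih =>
    intro h
    rw [Multiset.map_cons, Multiset.prod_cons]
    exact mul_pos (h a (Multiset.mem_cons_self a S))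
      (ih fun b hb => h b (Multiset.mem_cons_of_mem hb))

lemma eval_sign (q : Polynomial ℝ) (hm : q.Monic) (hs : q.Splits)
    (x : ℝ) (hx : ¬ q.IsRoot x) : 0 < (-1 : ℝ)^(cnt q x) * q.eval x := by
  have hq0 : q ≠ 0 := hm.ne_zero
  have heq := hs.eq_prod_roots_of_monic hm
  have heval : q.eval x = (q.roots.map (fun a => x - a)).prod := by
    conv_lhs => rw [heq]
    rw [eval_multiset_prod, Multiset.map_map]
    congr 1
    apply Multiset.map_congr rfl
    intro a _
    simp
  have hsplit := Multiset.filter_add_not (fun s => x < s) q.roots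
  have hmemroots : ∀ a ∈ q.roots, a ≠ x := by
    intro a ha hax
    exact hx (hax ▸ (isRoot_of_mem_roots ha))
  have h1 : 0 < (-1 : ℝ)^(Multiset.card (q.roots.filter (fun s => x < s))) *
      ((q.roots.filter (fun s => x < s)).map (fun a => x - a)).prod := by
    apply prod_map_neg
    intro a ha
    have := (Multiset.mem_filter.1 ha).2
    linarith
  have h2 : 0 < ((q.roots.filter (fun s => ¬ x < s)).map (fun a => x - a)).prod := by
    apply prod_map_pos
    intro a ha
    obtain ⟨hmem, hns⟩ := Multiset.mem_filter.1 ha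
    have hne := hmemroots a hmem
    push_neg at hns
    cases lt_or_eq_of_le hns with
    | inl h => linarith
    | inr h => exact absurd h hne
  have hc : cnt q x = Multiset.card (q.roots.filter (fun s => x < s)) := by
    unfold cnt
    rw [Multiset.countP_eq_card_filter]
  rw [hc, heval]
  calc (0:ℝ) < ((-1 : ℝ)^(Multiset.card (q.roots.filter (fun s => x < s))) *
      ((q.roots.filter (fun s => x < s)).map (fun a => x - a)).prod) *
      ((q.roots.filter (fun s => ¬ x < s)).map (fun a => x - a)).prod := mul_pos h1 h2
    _ = (-1 : ℝ)^(Multiset.card (q.roots.filter (fun s => x < s))) *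
        (q.roots.map (fun a => x - a)).prod := by
        rw [mul_assoc]
        congr 1
        rw [← Multiset.prod_add, ← Multiset.map_add, hsplit]

lemma eval_pos_of_roots_neg (q : Polynomial ℝ) (hm : q.Monic)
    (hs : q.Splits) (hr : ∀ s ∈ q.roots, s < 0)
    (x : ℝ) (hx : 0 ≤ x) : 0 < q.eval x := by
  have hnr : ¬ q.IsRoot x := by
    intro h
    have : x ∈ q.roots := (mem_roots hm.ne_zero).2 h
    linarith [hr x this]
  have h := eval_sign q hm hs x hnr
  have hc : cnt q x = 0 := by
    unfold cnt
    rw [Multiset.countP_eq_zero]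
    intro a ha
    have := hr a ha
    intro hxa
    linarith
  rw [hc] at h
  simpa using h

lemma poly_ivt (r : Polynomial ℝ) {u v : ℝ} (huv : u < v)
    (h : r.eval u * r.eval v < 0) : ∃ t, u < t ∧ t < v ∧ r.eval t = 0 := by
  have hcont : ContinuousOn (fun y => r.eval y) (Set.Icc u v) :=
    (Polynomial.continuous r).continuousOn
  rcases lt_or_ge (r.eval u) 0 with hu | hu
  · have hv : 0 < r.eval v := by nlinarith
    have hmem : (0:ℝ) ∈ Set.Ioo (r.eval u) (r.eval v) := ⟨hu, hv⟩
    obtain ⟨t, ht, h0⟩ := intermediate_value_Ioo huv.le hcont hmem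
    exact ⟨t, ht.1, ht.2, h0⟩
  · have hu' : 0 < r.eval u := by
      rcases lt_or_eq_of_le hu with h' | h'
      · exact h'
      · exfalso; rw [← h'] at h; simp at h
    have hv : r.eval v < 0 := by nlinarith
    have hmem : (0:ℝ) ∈ Set.Ioo (r.eval v) (r.eval u) := ⟨hv, hu'⟩
    obtain ⟨t, ht, h0⟩ := intermediate_value_Ioo' huv.le hcont hmem
    exact ⟨t, ht.1, ht.2, h0⟩

lemma exists_le_neg_eval (r : Polynomial ℝ) (hm : r.Monic) (hd : 0 < r.natDegree)
    (z : ℝ) : ∃ y, y < z ∧ 0 < (-1 : ℝ)^(r.natDegree) * r.eval y := by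
  set d := r.natDegree with hdd
  set s : Polynomial ℝ := C ((-1 : ℝ)^d) * (r.comp (-X)) with hsdef
  have hcompne : r.comp (-X) ≠ 0 := by
    intro h
    have : r.natDegree * (-X : Polynomial ℝ).natDegree = 0 := by
      rw [← natDegree_comp, h, natDegree_zero]
    simp [natDegree_neg] at this
    omega
  have hdegcomp : (r.comp (-X)).natDegree = d := by
    rw [natDegree_comp]
    simp [natDegree_neg, hdd]
  have hlc : s.leadingCoeff = 1 := by
    rw [hsdef, leadingCoeff_mul, leadingCoeff_C,
      leadingCoeff_comp (by simp [natDegree_neg])]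
    have h1 : (-X : Polynomial ℝ).leadingCoeff = -1 := by
      rw [leadingCoeff_neg, leadingCoeff_X]
    rw [h1, hm.leadingCoeff, one_mul, ← pow_add]
    exact Even.neg_one_pow ⟨d, by ring⟩
  have hs0 : s ≠ 0 := by
    intro h
    rw [h] at hlc
    simp at hlc
  have hsd : s.natDegree = d := by
    rw [hsdef, natDegree_mul (by simp) hcompne, natDegree_C, hdegcomp, zero_add]
  have hsdeg : 0 < s.degree := by
    rw [degree_eq_natDegree hs0, hsd]
    exact_mod_cast hd
  have htend := Polynomial.tendsto_atTop_of_leadingCoeff_nonneg s hsdeg (by rw [hlc]; norm_num)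
  have hev := (htend.eventually_ge_atTop 1).and (Filter.eventually_gt_atTop (-z))
  obtain ⟨y, hy1, hy2⟩ := hev.exists
  refine ⟨-y, by linarith, ?_⟩
  have heval : s.eval y = (-1 : ℝ)^d * r.eval (-y) := by
    rw [hsdef, eval_mul, eval_C, eval_comp]
    simp
  rw [← heval]
  linarith


lemma exists_gap (β : ℝ) : ∀ (S : Multiset ℝ), ∃ x, x < β ∧ ∀ s ∈ S, s < β → s ≤ x := by
  intro S
  induction S using Multiset.induction with
  | empty => exact ⟨β - 1, by linarith, by simp⟩
  | cons a S ih =>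
    obtain ⟨x, hx, h⟩ := ih
    by_cases ha : a < β
    · refine ⟨max x a, max_lt hx ha, ?_⟩
      intro s hs _
      rcases Multiset.mem_cons.1 hs with h1 | h1
      · subst h1; exact le_max_right _ _
      · exact le_trans (h s h1 (by assumption)) (le_max_left _ _)
    · refine ⟨x, hx, ?_⟩
      intro s hs hsβ
      rcases Multiset.mem_cons.1 hs with h1 | h1
      · exact absurd (h1 ▸ hsβ) ha
      · exact h s h1 hsβ

/-- There is `x < β` arbitrary close from below in the sense that `p` has no
roots in `(x, β]` (given `β` is not a root), so `cnt p x = cnt p β`. -/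
lemma cnt_eq_of_gap (p : Polynomial ℝ) (β : ℝ) (hβ : ¬ p.IsRoot β) :
    ∃ x, x < β ∧ cnt p x = cnt p β := by
  obtain ⟨x, hx, h⟩ := exists_gap β p.roots
  refine ⟨x, hx, ?_⟩
  unfold cnt
  apply Multiset.countP_congr rfl
  intro s hs
  have hsne : s ≠ β := by
    intro he
    exact hβ (he ▸ isRoot_of_mem_roots hs)
  rw [eq_iff_iff]
  constructor
  · intro hxs
    rcases lt_trichotomy s β with h1 | h1 | h1
    · exact absurd hxs (not_lt.2 (h s hs h1))
    · exact absurd h1 hsne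
    · exact h1
  · intro hβs
    exact lt_trans hx hβs

structure Good (g h : Polynomial ℝ) : Prop where
  mg : g.Monic
  mh : h.Monic
  sg : g.Splits
  sh : h.Splits
  dh : h.natDegree = g.natDegree + 1
  ng : ∀ s ∈ g.roots, s < 0
  nh : ∀ s ∈ h.roots, s < 0
  c1 : ∀ x, cnt g x ≤ cnt h x
  c2 : ∀ x, cnt h x ≤ cnt g x + 1

lemma one_add_X_eq : (1 + X : Polynomial ℝ) = X - C (-1) := by
  rw [map_neg, C_1]; ring

lemma monic_one_add_X : (1 + X : Polynomial ℝ).Monic := by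
  rw [one_add_X_eq]; exact monic_X_sub_C _

lemma roots_one_add_X : (1 + X : Polynomial ℝ).roots = {-1} := by
  rw [one_add_X_eq, roots_X_sub_C]

lemma splits_one_add_X : (1 + X : Polynomial ℝ).Splits := by
  rw [one_add_X_eq]; exact Splits.X_sub_C _

lemma step0 (h : Polynomial ℝ) (mh : h.Monic) (sh : h.Splits)
    (nh : ∀ s ∈ h.roots, s < 0) : Good h ((1 + X) * h) := by
  have hne : (1 + X : Polynomial ℝ) * h ≠ 0 := (monic_one_add_X.mul mh).ne_zero
  have hroots : ((1 + X : Polynomial ℝ) * h).roots = -1 ::ₘ h.roots := by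
    rw [roots_mul hne, roots_one_add_X]
    rfl
  have hcnt : ∀ x, cnt ((1 + X) * h) x = cnt h x + (if x < -1 then 1 else 0) := by
    intro x
    unfold cnt
    rw [hroots, Multiset.countP_cons]
  refine ⟨mh, monic_one_add_X.mul mh, sh, Splits.mul splits_one_add_X sh, ?_, nh, ?_, ?_, ?_⟩
  · rw [natDegree_mul (monic_one_add_X.ne_zero) mh.ne_zero]
    have : (1 + X : Polynomial ℝ).natDegree = 1 := by
      rw [one_add_X_eq]; exact natDegree_X_sub_C _
    omega
  · intro s hs
    rw [hroots] at hs
    rcases Multiset.mem_cons.1 hs with h1 | h1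
    · rw [h1]; norm_num
    · exact nh s h1
  · intro x; rw [hcnt]; omega
  · intro x; rw [hcnt]; split <;> omega

lemma step (g h : Polynomial ℝ) (a : ℝ) (ha : 0 ≤ a) (G : Good g h) :
    Good h ((1 + X) * h + C a * X * g) := by
  rcases eq_or_lt_of_le ha with rfl | hapos
  · have he : (1 + X) * h + C (0:ℝ) * X * g = (1 + X) * h := by simp
    rw [he]
    exact step0 h G.mh G.sh G.nh
  · have hg0 : g ≠ 0 := G.mg.ne_zero
    have hh0 : h ≠ 0 := G.mh.ne_zero
    set d₀ := EuclideanDomain.gcd g h with hd₀def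
    have hd₀ : d₀ ≠ 0 := by
      intro hz
      exact hg0 ((EuclideanDomain.gcd_eq_zero_iff).1 hz).1
    set d := d₀ * C (d₀.leadingCoeff)⁻¹ with hddef
    have hmd : d.Monic := monic_mul_leadingCoeff_inv hd₀
    have hd0 : d ≠ 0 := hmd.ne_zero
    have hdd₀ : d ∣ d₀ :=
      ⟨C d₀.leadingCoeff, by
        rw [hddef, mul_assoc, ← C_mul, inv_mul_cancel₀ (leadingCoeff_ne_zero.2 hd₀), C_1,
          mul_one]⟩
    have hdg : d ∣ g := hdd₀.trans (EuclideanDomain.gcd_dvd_left g h)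
    have hdh : d ∣ h := hdd₀.trans (EuclideanDomain.gcd_dvd_right g h)
    obtain ⟨p, hp⟩ := hdg
    obtain ⟨q, hq⟩ := hdh
    have hmp : p.Monic := hmd.of_mul_monic_left (hp ▸ G.mg)
    have hmq : q.Monic := hmd.of_mul_monic_left (hq ▸ G.mh)
    have hp0 : p ≠ 0 := hmp.ne_zero
    have hq0 : q ≠ 0 := hmq.ne_zero
    have hsp : p.Splits :=
      Splits.of_dvd G.sg hg0 ⟨d, by rw [hp]; ring⟩
    have hsq : q.Splits :=
      Splits.of_dvd G.sh hh0 ⟨d, by rw [hq]; ring⟩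
    have hsd : d.Splits :=
      Splits.of_dvd G.sg hg0 ⟨p, hp⟩
    have hrootsg : g.roots = d.roots + p.roots := by
      rw [hp]; exact roots_mul (by rw [← hp]; exact hg0)
    have hrootsh : h.roots = d.roots + q.roots := by
      rw [hq]; exact roots_mul (by rw [← hq]; exact hh0)
    have hcg : ∀ x, cnt g x = cnt d x + cnt p x := by
      intro x; unfold cnt; rw [hrootsg, Multiset.countP_add]
    have hch : ∀ x, cnt h x = cnt d x + cnt q x := by
      intro x; unfold cnt; rw [hrootsh, Multiset.countP_add]
    have cp1 : ∀ x, cnt p x ≤ cnt q x := by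
      intro x; have := G.c1 x; rw [hcg x, hch x] at this; omega
    have cp2 : ∀ x, cnt q x ≤ cnt p x + 1 := by
      intro x; have := G.c2 x; rw [hcg x, hch x] at this; omega
    have hnocommon : ∀ β : ℝ, q.IsRoot β → ¬ p.IsRoot β := by
      intro β hqβ hpβ
      have h1 : d * (X - C β) ∣ g := by
        rw [hp]; exact mul_dvd_mul_left d (dvd_iff_isRoot.2 hpβ)
      have h2 : d * (X - C β) ∣ h := by
        rw [hq]; exact mul_dvd_mul_left d (dvd_iff_isRoot.2 hqβ)
      have h3 : d * (X - C β) ∣ d₀ := EuclideanDomain.dvd_gcd h1 h2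
      have h4 := Polynomial.natDegree_le_of_dvd h3 hd₀
      have h5 : (d * (X - C β)).natDegree = d.natDegree + 1 := by
        rw [natDegree_mul hd0 (X_sub_C_ne_zero β), natDegree_X_sub_C]
      have h6 : d₀.natDegree = d.natDegree := by
        rw [hddef, natDegree_mul hd₀
          (by simpa using inv_ne_zero (leadingCoeff_ne_zero.2 hd₀)), natDegree_C]
        omega
      omega
    set e := p.natDegree with hedef
    set m := q.natDegree with hmdef
    have hdgg : g.natDegree = d.natDegree + e := by rw [hp, natDegree_mul hd0 hp0]
    have hdhh : h.natDegree = d.natDegree + m := by rw [hq, natDegree_mul hd0 hq0]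
    have hme : m = e + 1 := by have := G.dh; omega
    have hm1 : 1 ≤ m := by omega
    have hcardq : Multiset.card q.roots = m := splits_iff_card_roots.1 hsq
    set L := sortedRootsDesc q with hLdef
    have hLlen : L.length = m := by rw [hLdef, length_sortedRootsDesc, hcardq]
    have hLmem : ∀ i (hi : i < L.length), L.get ⟨i, hi⟩ ∈ q.roots := by
      intro i hi
      have h1 : L.get ⟨i, hi⟩ ∈ (↑L : Multiset ℝ) := by
        exact_mod_cast L.get_mem _
      have h2 : (↑L : Multiset ℝ) = q.roots := coe_sortedRootsDesc q
      rw [h2] at h1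
      exact h1
    have hLroot : ∀ i (hi : i < L.length), q.IsRoot (L.get ⟨i, hi⟩) := fun i hi =>
      isRoot_of_mem_roots (hLmem i hi)
    have hLneg : ∀ i (hi : i < L.length), L.get ⟨i, hi⟩ < 0 := by
      intro i hi
      refine G.nh _ ?_
      rw [hrootsh]
      exact Multiset.mem_add.2 (Or.inr (hLmem i hi))
    have hLmono : ∀ i k (hk : k < L.length) (hik : i ≤ k),
        L.get ⟨k, hk⟩ ≤ L.get ⟨i, lt_of_le_of_lt hik hk⟩ := by
      intro i k hk hik
      rcases eq_or_lt_of_le hik with h1 | h1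
      · subst h1; exact le_refl _
      · exact List.pairwise_iff_get.1 (sortedRootsDesc_sorted q) _ _ h1
    have hcqle : ∀ (x : ℝ) i (hi : i < L.length), ¬ x < L.get ⟨i, hi⟩ → cnt q x ≤ i := by
      intro x i hi hcon
      by_contra hc
      push_neg at hc
      exact hcon ((key q x i hi).2 hc)
    have hstrict : ∀ j (hj : j + 1 < L.length),
        L.get ⟨j + 1, hj⟩ < L.get ⟨j, by omega⟩ := by
      intro j hj
      rcases lt_or_eq_of_le (hLmono j (j+1) hj (by omega)) with h1 | h1
      · exact h1
      · exfalso
        set β := L.get ⟨j + 1, hj⟩ with hβdef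
        obtain ⟨x, hxβ, hxcnt⟩ := cnt_eq_of_gap p β (hnocommon β (hLroot _ hj))
        have h2 : j + 1 < cnt q x := (key q x (j+1) hj).1 hxβ
        have h3 : cnt q β ≤ j := hcqle β j (by omega) (by rw [← h1]; exact lt_irrefl β)
        have h4 : cnt p β ≤ j := le_trans (cp1 β) h3
        have h5 : cnt q x ≤ cnt p x + 1 := cp2 x
        rw [hxcnt] at h5
        omega
    have hcq : ∀ i (hi : i < L.length), cnt q (L.get ⟨i, hi⟩) = i := by
      intro i hi
      have hle : cnt q (L.get ⟨i, hi⟩) ≤ i := hcqle _ i hi (lt_irrefl _)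
      match i with
      | 0 => omega
      | j + 1 =>
        have hj' : j < L.length := by omega
        have hgt : L.get ⟨j + 1, hi⟩ < L.get ⟨j, hj'⟩ := hstrict j hi
        have := (key q (L.get ⟨j + 1, hi⟩) j hj').1 hgt
        omega
    have hcp : ∀ i (hi : i < L.length), cnt p (L.get ⟨i, hi⟩) = i := by
      intro i hi
      set β := L.get ⟨i, hi⟩ with hβdef
      have h1 : cnt p β ≤ i := by
        have := cp1 β; rw [hcq i hi] at this; omega
      obtain ⟨x, hxβ, hxcnt⟩ := cnt_eq_of_gap p β (hnocommon β (hLroot _ hi))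
      have h2 : i < cnt q x := (key q x i hi).1 hxβ
      have h3 := cp2 x
      rw [hxcnt] at h3
      omega
    have hsignp : ∀ i (hi : i < L.length), 0 < (-1:ℝ)^i * p.eval (L.get ⟨i, hi⟩) := by
      intro i hi
      have := eval_sign p hmp hsp _ (hnocommon _ (hLroot i hi))
      rwa [hcp i hi] at this
    set r := (1 + X) * q + C a * X * p with hrdef
    have hqrootneg : ∀ s ∈ q.roots, s < 0 := by
      intro s hs
      refine G.nh s ?_
      rw [hrootsh]
      exact Multiset.mem_add.2 (Or.inr hs)
    have hdeg1X : (1 + X : Polynomial ℝ).natDegree = 1 := by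
      rw [one_add_X_eq, natDegree_X_sub_C]
    have hm1q : ((1 + X) * q).Monic := monic_one_add_X.mul hmq
    have hdeg1 : ((1 + X) * q).natDegree = m + 1 := by
      rw [natDegree_mul monic_one_add_X.ne_zero hq0, hdeg1X]
      omega
    have hCa : C a ≠ 0 := by
      simpa using ne_of_gt hapos
    have haXp0 : C a * X * p ≠ 0 := mul_ne_zero (mul_ne_zero hCa X_ne_zero) hp0
    have hdeg2 : (C a * X * p).natDegree = e + 1 := by
      rw [natDegree_mul (mul_ne_zero hCa X_ne_zero) hp0, natDegree_mul hCa X_ne_zero,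
        natDegree_C, natDegree_X]
      omega
    have hdlt : (C a * X * p).degree < ((1 + X) * q).degree := by
      rw [degree_eq_natDegree haXp0, degree_eq_natDegree hm1q.ne_zero, hdeg1, hdeg2]
      exact_mod_cast (by omega : e + 1 < m + 1)
    have hmr : r.Monic := hm1q.add_of_left hdlt
    have hr0 : r ≠ 0 := hmr.ne_zero
    have hdr : r.natDegree = m + 1 := by
      rw [hrdef, natDegree_eq_of_degree_eq (degree_add_eq_left_of_degree_lt hdlt), hdeg1]
    have hrevalroot : ∀ β : ℝ, q.IsRoot β → r.eval β = a * β * p.eval β := by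
      intro β hβ
      have hβ' : q.eval β = 0 := hβ
      rw [hrdef]
      simp only [eval_add, eval_mul, eval_one, eval_C, eval_X, hβ']
      ring
    have hrsign : ∀ i (hi : i < L.length),
        0 < (-1:ℝ)^(i+1) * r.eval (L.get ⟨i, hi⟩) := by
      intro i hi
      rw [hrevalroot _ (hLroot i hi)]
      have h1 := hsignp i hi
      have h2 : L.get ⟨i, hi⟩ < 0 := hLneg i hi
      have h3 : (-1:ℝ)^(i+1) * (a * L.get ⟨i, hi⟩ * p.eval (L.get ⟨i, hi⟩)) =
          (a * (-(L.get ⟨i, hi⟩))) * ((-1:ℝ)^i * p.eval (L.get ⟨i, hi⟩)) := by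
        rw [pow_succ]; ring
      rw [h3]
      exact mul_pos (mul_pos hapos (by linarith)) h1
    have hr0pos : 0 < r.eval 0 := by
      have h1 : r.eval 0 = q.eval 0 := by
        rw [hrdef]; simp
      rw [h1]
      exact eval_pos_of_roots_neg q hmq hsq hqrootneg 0 le_rfl
    have hlastlt : m - 1 < L.length := by omega
    obtain ⟨y, hy, hysign⟩ := exists_le_neg_eval r hmr (by rw [hdr]; omega) (L.get ⟨m - 1, hlastlt⟩)
    rw [hdr] at hysign
    set Lg : ℕ → ℝ := fun i => L.getD i 0 with hLgdef
    have hLg : ∀ i (hi : i < L.length), Lg i = L.get ⟨i, hi⟩ := by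
      intro i hi
      rw [hLgdef]
      exact List.getD_eq_getElem (l := L) (d := 0) hi
    have hex : ∀ i, i ≤ m → ∃ t, r.eval t = 0 ∧
        (if i = m then y else Lg i) < t ∧ t < (if i = 0 then 0 else Lg (i - 1)) := by
      intro i him
      match i with
      | 0 =>
        rw [if_neg (by omega), if_pos rfl]
        have h0 : (0:ℕ) < L.length := by omega
        rw [hLg 0 h0]
        have hu : L.get ⟨0, h0⟩ < 0 := hLneg 0 h0
        have hs0 := hrsign 0 h0
        have hprod : r.eval (L.get ⟨0, h0⟩) * r.eval 0 < 0 := by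
          have hpow : (-1:ℝ)^(0+1) = -1 := by norm_num
          rw [hpow] at hs0
          nlinarith [hr0pos]
        obtain ⟨t, ht1, ht2, ht3⟩ := poly_ivt r hu hprod
        exact ⟨t, ht3, ht1, ht2⟩
      | j + 1 =>
        rw [if_neg (Nat.succ_ne_zero j)]
        have hj1 : j + 1 - 1 = j := rfl
        rw [hj1]
        by_cases hjm : j + 1 = m
        · rw [if_pos hjm]
          have hjL : j < L.length := by omega
          rw [hLg j hjL]
          have hyj : y < L.get ⟨j, hjL⟩ := by
            have heqi : (⟨m - 1, hlastlt⟩ : Fin L.length) = ⟨j, hjL⟩ := by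
              apply Fin.mk_eq_mk.2
              omega
            rwa [heqi] at hy
          have hsj := hrsign j hjL
          have hprod : r.eval y * r.eval (L.get ⟨j, hjL⟩) < 0 := by
            have hmul := mul_pos hysign hsj
            have he2 : ((-1:ℝ)^(m+1) * r.eval y) *
                ((-1:ℝ)^(j+1) * r.eval (L.get ⟨j, hjL⟩)) =
                (-1:ℝ)^(m+1+(j+1)) * (r.eval y * r.eval (L.get ⟨j, hjL⟩)) := by
              rw [pow_add]; ring
            rw [he2] at hmul
            have hodd : Odd (m+1+(j+1)) := by
              refine ⟨j + 1, ?_⟩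
              omega
            rw [hodd.neg_one_pow] at hmul
            linarith
          obtain ⟨t, ht1, ht2, ht3⟩ := poly_ivt r hyj hprod
          exact ⟨t, ht3, ht1, ht2⟩
        · rw [if_neg hjm]
          have hjL1 : j + 1 < L.length := by omega
          have hjL : j < L.length := by omega
          rw [hLg (j+1) hjL1, hLg j hjL]
          have hlt : L.get ⟨j+1, hjL1⟩ < L.get ⟨j, hjL⟩ := hstrict j hjL1
          have hs1 := hrsign (j+1) hjL1
          have hs2 := hrsign j hjL
          have hprod : r.eval (L.get ⟨j+1, hjL1⟩) * r.eval (L.get ⟨j, hjL⟩) < 0 := by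
            have hmul := mul_pos hs1 hs2
            have he2 : ((-1:ℝ)^(j+1+1) * r.eval (L.get ⟨j+1, hjL1⟩)) *
                ((-1:ℝ)^(j+1) * r.eval (L.get ⟨j, hjL⟩)) =
                (-1:ℝ)^(j+1+1+(j+1)) * (r.eval (L.get ⟨j+1, hjL1⟩) * r.eval (L.get ⟨j, hjL⟩)) := by
              rw [pow_add]; ring
            rw [he2] at hmul
            have hodd : Odd (j+1+1+(j+1)) := ⟨j + 1, by omega⟩
            rw [hodd.neg_one_pow] at hmul
            linarith
          obtain ⟨t, ht1, ht2, ht3⟩ := poly_ivt r hlt hprod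
          exact ⟨t, ht3, ht1, ht2⟩
    have hex' : ∀ i : ℕ, ∃ t, i ≤ m → (r.eval t = 0 ∧
        (if i = m then y else Lg i) < t ∧ t < (if i = 0 then 0 else Lg (i - 1))) := by
      intro i
      by_cases hi : i ≤ m
      · obtain ⟨t, ht⟩ := hex i hi
        exact ⟨t, fun _ => ht⟩
      · exact ⟨0, fun hh => absurd hh hi⟩
    choose γ hγ using hex'
    have hγroot : ∀ i, i ≤ m → r.IsRoot (γ i) := fun i hi => ((hγ i) hi).1
    have hγlow : ∀ i, i ≤ m → (if i = m then y else Lg i) < γ i := fun i hi => ((hγ i) hi).2.1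
    have hγhigh : ∀ i, i ≤ m → γ i < (if i = 0 then 0 else Lg (i - 1)) :=
      fun i hi => ((hγ i) hi).2.2
    have hγneg : ∀ i, i ≤ m → γ i < 0 := by
      intro i hi
      match i with
      | 0 =>
        have h1 := hγhigh 0 hi
        rwa [if_pos rfl] at h1
      | j + 1 =>
        have h1 := hγhigh (j+1) hi
        rw [if_neg (Nat.succ_ne_zero j)] at h1
        have hjL : j < L.length := by omega
        have h2 : Lg (j + 1 - 1) = L.get ⟨j, hjL⟩ := hLg j hjL
        rw [h2] at h1
        exact lt_trans h1 (hLneg j hjL)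
    have hγanti : ∀ i j, i < j → j ≤ m → γ j < γ i := by
      intro i j hij hjm
      have h1 := hγhigh j hjm
      have h2 := hγlow i (by omega)
      rw [if_neg (by omega)] at h1
      rw [if_neg (by omega)] at h2
      have hj1L : j - 1 < L.length := by omega
      have hiL : i < L.length := by omega
      rw [hLg (j-1) hj1L] at h1
      rw [hLg i hiL] at h2
      have h3 : L.get ⟨j-1, hj1L⟩ ≤ L.get ⟨i, hiL⟩ := hLmono i (j-1) hj1L (by omega)
      linarith
    set Lγ : List ℝ := (List.range (m+1)).map γ with hLγdef
    have hLγlen : Lγ.length = m + 1 := by simp [hLγdef]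
    have hLγget : ∀ fi : Fin Lγ.length, Lγ.get fi = γ fi.1 := by
      intro fi
      simp [hLγdef, List.get_eq_getElem]
    have hLγim : ∀ i, i ≤ m → (Lγ : List ℝ).length = m + 1 := fun _ _ => hLγlen
    have hLγsorted : Lγ.Pairwise (· ≥ ·) := by
      rw [List.pairwise_iff_get]
      intro fi fj hij
      rw [hLγget fi, hLγget fj]
      have hjm : fj.1 ≤ m := by
        have h1 := fj.2
        have h2 := hLγlen
        omega
      exact le_of_lt (hγanti fi.1 fj.1 hij hjm)
    have hnodup : Lγ.Nodup := by
      rw [List.Nodup, List.pairwise_iff_get]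
      intro fi fj hij
      rw [hLγget fi, hLγget fj]
      have hjm : fj.1 ≤ m := by
        have h1 := fj.2
        have h2 := hLγlen
        omega
      exact (ne_of_lt (hγanti fi.1 fj.1 hij hjm)).symm
    have hγmemroots : ∀ i, i ≤ m → γ i ∈ r.roots := by
      intro i hi
      exact (mem_roots hr0).2 (hγroot i hi)
    have hcardLγ : Multiset.card (↑Lγ : Multiset ℝ) = m + 1 := by
      rw [Multiset.coe_card, hLγlen]
    have hcoeLγ : (↑Lγ : Multiset ℝ) = r.roots := by
      apply Multiset.eq_of_le_of_card_le
      · rw [Multiset.le_iff_count]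
        intro b
        by_cases hb : b ∈ (↑Lγ : Multiset ℝ)
        · have h1 : Multiset.count b (↑Lγ : Multiset ℝ) = 1 :=
            Multiset.count_eq_one_of_mem (by exact_mod_cast hnodup) hb
          rw [h1]
          apply Multiset.one_le_count_iff_mem.2
          have hb' : b ∈ Lγ := by exact_mod_cast hb
          rw [hLγdef] at hb'
          obtain ⟨i, hi, hbi⟩ := List.mem_map.1 hb'
          rw [← hbi]
          exact hγmemroots i (by have := List.mem_range.1 hi; omega)
        · rw [Multiset.count_eq_zero.2 hb]
          omega
      · have h1 := card_roots' r
        rw [hcardLγ, hdr] at *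
        omega
    have hsr : r.Splits := by
      apply splits_iff_card_roots.2
      rw [← hcoeLγ, hcardLγ, hdr]
    have hrootrneg : ∀ s ∈ r.roots, s < 0 := by
      intro s hs
      rw [← hcoeLγ] at hs
      have hs' : s ∈ Lγ := by exact_mod_cast hs
      rw [hLγdef] at hs'
      obtain ⟨i, hi, hbi⟩ := List.mem_map.1 hs'
      rw [← hbi]
      exact hγneg i (by have := List.mem_range.1 hi; omega)
    have hcntLγ : ∀ x : ℝ, Multiset.countP (fun s => x < s) (↑Lγ : Multiset ℝ) = cnt r x := by
      intro x
      unfold cnt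
      rw [hcoeLγ]
    have hcntr : ∀ (x : ℝ) i (hi : i < Lγ.length), (x < γ i ↔ i < cnt r x) := by
      intro x i hi
      have h1 := key_sorted x Lγ hLγsorted i hi
      rw [hLγget ⟨i, hi⟩, hcntLγ x] at h1
      exact h1
    have hqr1 : ∀ x, cnt q x ≤ cnt r x := by
      intro x
      rcases Nat.eq_zero_or_pos (cnt q x) with hk0 | hk0
      · omega
      · have hkm : cnt q x ≤ m := by
          have := cnt_le_card q x
          rw [hcardq] at this
          omega
        have hk1 : cnt q x - 1 < L.length := by omega
        have hxL : x < L.get ⟨cnt q x - 1, hk1⟩ := (key q x (cnt q x - 1) hk1).2 (by omega)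
        have hγgt : L.get ⟨cnt q x - 1, hk1⟩ < γ (cnt q x - 1) := by
          have h1 := hγlow (cnt q x - 1) (by omega)
          rw [if_neg (by omega), hLg (cnt q x - 1) hk1] at h1
          exact h1
        have hiL : cnt q x - 1 < Lγ.length := by omega
        have := (hcntr x (cnt q x - 1) hiL).1 (lt_trans hxL hγgt)
        omega
    have hqr2 : ∀ x, cnt r x ≤ cnt q x + 1 := by
      intro x
      rcases le_or_gt (cnt r x) 1 with hj1 | hj1
      · omega
      · have hjm : cnt r x ≤ m + 1 := by
          have h1 := cnt_le_card r x
          rw [← hcoeLγ, hcardLγ] at h1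
          omega
        have hij : cnt r x - 1 < Lγ.length := by omega
        have hxγ : x < γ (cnt r x - 1) := (hcntr x (cnt r x - 1) hij).2 (by omega)
        have h1 := hγhigh (cnt r x - 1) (by omega)
        rw [if_neg (by omega)] at h1
        have hj2L : cnt r x - 1 - 1 < L.length := by omega
        rw [hLg (cnt r x - 1 - 1) hj2L] at h1
        have := (key q x (cnt r x - 1 - 1) hj2L).1 (lt_trans hxγ h1)
        omega
    have hkform : (1 + X) * h + C a * X * g = d * r := by
      rw [hp, hq, hrdef]; ring
    rw [hkform]
    have hdr0 : d * r ≠ 0 := mul_ne_zero hd0 hr0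
    have hrootsk : (d * r).roots = d.roots + r.roots := roots_mul hdr0
    have hcdk : ∀ x, cnt (d * r) x = cnt d x + cnt r x := by
      intro x
      unfold cnt
      rw [hrootsk, Multiset.countP_add]
    refine ⟨G.mh, hmd.mul hmr, G.sh, Splits.mul hsd hsr, ?_, G.nh, ?_, ?_, ?_⟩
    · rw [natDegree_mul hd0 hr0, hdr, hdhh]
      omega
    · intro s hs
      rw [hrootsk] at hs
      rcases Multiset.mem_add.1 hs with h1 | h1
      · refine G.ng s ?_
        rw [hrootsg]
        exact Multiset.mem_add.2 (Or.inl h1)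
      · exact hrootrneg s h1
    · intro x
      rw [hcdk, hch]
      have := hqr1 x
      omega
    · intro x
      rw [hcdk, hch]
      have := hqr2 x
      omega


/-- For the Chow polynomials of maximal ranked posets, defined by `f 0 = 0`,
`f 1 = 1 + t` and `f (n+1) = (1+t)·f n + (c (n+1) - 1)·t·f (n-1)` with each
`c i` a positive integer, every `f n` with `n ≥ 1` is real-rooted and
interlaces `f (n+1)`. -/
theorem maximal_ranked_chow_real_rooted (c : ℕ → ℕ) (hc : ∀ i, 1 ≤ c i)
    (f : ℕ → Polynomial ℝ) (h0 : f 0 = 0) (h1 : f 1 = 1 + X)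
    (hrec : ∀ n : ℕ, 1 ≤ n →
      f (n + 1) = (1 + X) * f n + C ((c (n + 1) : ℝ) - 1) * X * f (n - 1)) :
    ∀ n : ℕ, 1 ≤ n → RealRooted (f n) ∧ Interlaces (f n) (f (n + 1)) := by
  have hgood : ∀ n : ℕ, 1 ≤ n → Good (f n) (f (n + 1)) := by
    intro n hn
    induction n with
    | zero => omega
    | succ k ih =>
      rcases Nat.eq_zero_or_pos k with hk | hk
      · subst hk
        have hf2 : f 2 = (1 + X) * f 1 := by
          have hr1 := hrec 1 le_rfl
          rw [show (1:ℕ) - 1 = 0 from rfl, h0] at hr1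
          simpa using hr1
        rw [hf2, h1]
        refine step0 _ monic_one_add_X splits_one_add_X ?_
        rw [roots_one_add_X]
        intro s hs
        rw [Multiset.mem_singleton.1 hs]
        norm_num
      · have ihg := ih hk
        have hrecc := hrec (k + 1) (by omega)
        rw [show k + 1 - 1 = k from rfl] at hrecc
        rw [show k + 1 + 1 = k + 2 from rfl] at hrecc
        rw [show k + 1 + 1 = k + 2 from rfl]
        rw [hrecc]
        refine step (f k) (f (k + 1)) _ ?_ ihg
        have h2 : (1:ℝ) ≤ (c (k + 1 + 1) : ℝ) := by exact_mod_cast hc (k + 1 + 1)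
        linarith
  intro n hn
  have G := hgood n hn
  have hRRg : RealRooted (f n) := ⟨G.mg.ne_zero, splits_iff_card_roots.1 G.sg⟩
  have hRRh : RealRooted (f (n + 1)) := ⟨G.mh.ne_zero, splits_iff_card_roots.1 G.sh⟩
  refine ⟨hRRg, interlaces_of_cnt _ _ hRRg hRRh ?_ ?_ (Or.inr G.dh) G.c1 G.c2⟩
  · rw [G.mg.leadingCoeff]
    norm_num
  · rw [G.mh.leadingCoeff]
    norm_num
end

section
/- Let P be a finite bounded graded poset of rank r ≥ 2. Then H_P(t) = (1+t)·H_{τ(P)}(t) - t·H_{τ²(P)}(t) + t·∑_{ρ(x) = r-1} H_{τ([0̂,x])}(t), where the sum ranges over coatoms x of P. -/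
open Polynomial Finset

attribute [local instance] Classical.propDecidable

variable {P : Type*} [PartialOrder P] [Fintype P]

noncomputable local instance : LocallyFiniteOrder P := Fintype.toLocallyFiniteOrder

noncomputable def posetMu (S : Finset P) (x y : P) : ℤ :=
  if x = y then 1
  else -∑ z ∈ (S ∩ Finset.Ico x y).attach, posetMu S x z.1
termination_by (Finset.Icc x y).card
decreasing_by
  · have hz := (Finset.mem_inter.mp z.2).2
    rw [Finset.mem_Ico] at hz
    refine Finset.card_lt_card ⟨Finset.Icc_subset_Icc_right hz.2.le, fun hsub => ?_⟩
    have := hsub (Finset.mem_Icc.mpr ⟨hz.1.trans hz.2.le, le_refl y⟩)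
    exact absurd (Finset.mem_Icc.mp this).2 (fun h => lt_irrefl _ (lt_of_lt_of_le hz.2 h))

noncomputable def posetChi (S : Finset P) (ρ : P → ℕ) (x y : P) : Polynomial ℝ :=
  ∑ z ∈ S ∩ Finset.Icc x y, C (posetMu S x z : ℝ) * X ^ (ρ y - ρ z)

noncomputable def posetChibar (S : Finset P) (ρ : P → ℕ) (x y : P) : Polynomial ℝ :=
  if x = y then -1 else posetChi S ρ x y /ₘ (X - C 1)

noncomputable def posetChow (S : Finset P) (ρ : P → ℕ) (x y : P) : Polynomial ℝ :=
  if x = y then 1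
  else ∑ z ∈ (S ∩ Finset.Ioc x y).attach, posetChibar S ρ x z.1 * posetChow S ρ z.1 y
termination_by (Finset.Icc x y).card
decreasing_by
  · have hz := (Finset.mem_inter.mp z.2).2
    rw [Finset.mem_Ioc] at hz
    refine Finset.card_lt_card ⟨Finset.Icc_subset_Icc_left hz.1.le, fun hsub => ?_⟩
    have := hsub (Finset.mem_Icc.mpr ⟨le_refl x, hz.1.le.trans hz.2⟩)
    exact absurd (Finset.mem_Icc.mp this).1 (fun h => lt_irrefl _ (lt_of_lt_of_le hz.1 h))

noncomputable def posetG (S : Finset P) (ρ : P → ℕ) (x y : P) : Polynomial ℝ :=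
  ∑ z ∈ S ∩ Finset.Icc x y, X ^ (ρ z - ρ x) * posetChow S ρ z y

def IsRankFn [BoundedOrder P] (ρ : P → ℕ) : Prop :=
  ρ ⊥ = 0 ∧ ∀ x y : P, x ⋖ y → ρ y = ρ x + 1

/-!
Expanding `H(x, y)` over its last step, `H(x, y) = ∑_{z < y} H(x, z) χ̄(z, y)` (the right-handed
form of the defining recursion: a one-sided inverse in the incidence algebra is two-sided), and
writing `χ̄(z, y) = t χ̄_{τ[z, y]}(z, y) - μ(z, y)`, the first part sums to `t H_{τ[x, y]}` and the
second, by induction and Möbius inversion, to `-1 - t ∑_{x < w < y} H_{τ[x, w]}`. This gives the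
truncation formula `H(x, y) = 1 + t ∑_{x < w ≤ y} H_{τ[x, w]}` for any finite poset with a strictly
monotone rank. Applying it to `P` and to `τ(P)` and subtracting proves the theorem: below rank
`r - 1` the intervals of `P` and `τ(P)` coincide, so only `H_{τ(P)}` and the coatom terms of the
first expansion and `H_{τ²(P)}` of the second survive.
-/

section Basic

variable (S : Finset P) (σ : P → ℕ)

theorem posetMu_self (x : P) : posetMu S x x = 1 := by
  rw [posetMu, if_pos rfl]

theorem posetMu_of_ne {x y : P} (h : x ≠ y) :
    posetMu S x y = -∑ z ∈ S ∩ Ico x y, posetMu S x z := by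
  rw [posetMu, if_neg h, sum_attach (S ∩ Ico x y) (posetMu S x)]

theorem posetChibar_self (x : P) : posetChibar S σ x x = -1 :=
  if_pos rfl

theorem posetChow_self (x : P) : posetChow S σ x x = 1 := by
  rw [posetChow, if_pos rfl]

theorem posetChow_of_ne {x y : P} (h : x ≠ y) :
    posetChow S σ x y = ∑ z ∈ S ∩ Ioc x y, posetChibar S σ x z * posetChow S σ z y := by
  rw [posetChow, if_neg h,
    sum_attach (S ∩ Ioc x y) fun z => posetChibar S σ x z * posetChow S σ z y]

end Basic

section Intervals

variable {S : Finset P} {x y : P} {M : Type*} [AddCommMonoid M]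

theorem sum_inter_Icc_eq_add_sum_inter_Ico (f : P → M) (hy : y ∈ S) (hxy : x ≤ y) :
    ∑ z ∈ S ∩ Icc x y, f z = f y + ∑ z ∈ S ∩ Ico x y, f z := by
  rw [← Ico_insert_right hxy, inter_insert_of_mem hy, sum_insert (by simp)]

theorem sum_inter_Icc_eq_add_sum_inter_Ioc (f : P → M) (hx : x ∈ S) (hxy : x ≤ y) :
    ∑ z ∈ S ∩ Icc x y, f z = f x + ∑ z ∈ S ∩ Ioc x y, f z := by
  rw [← Ioc_insert_left hxy, inter_insert_of_mem hx, sum_insert (by simp)]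

theorem sum_inter_Ioc_eq_add_sum_inter_Ioo (f : P → M) (hy : y ∈ S) (hxy : x < y) :
    ∑ z ∈ S ∩ Ioc x y, f z = f y + ∑ z ∈ S ∩ Ioo x y, f z := by
  rw [← Ioo_insert_right hxy, inter_insert_of_mem hy, sum_insert (by simp)]

end Intervals

theorem Finset.inter_eq_inter_of_subset {α : Type*} [DecidableEq α] {S T A B : Finset α}
    (h : S ∩ A = T ∩ A) (hBA : B ⊆ A) : S ∩ B = T ∩ B := by
  rw [← inter_eq_right.2 hBA, ← inter_assoc, h, inter_assoc]

section Locality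

theorem posetMu_congr {S T : Finset P} {x y : P} (h : S ∩ Ico x y = T ∩ Ico x y) :
    posetMu S x y = posetMu T x y := by
  induction y using WellFoundedLT.induction with
  | _ y ih =>
    rcases eq_or_ne x y with rfl | hxy
    · rw [posetMu_self, posetMu_self]
    rw [posetMu_of_ne S hxy, posetMu_of_ne T hxy, h]
    refine congrArg _ (sum_congr rfl fun z hz => ?_)
    have hz' := mem_Ico.1 (mem_inter.1 hz).2
    exact ih z hz'.2 (inter_eq_inter_of_subset h (Ico_subset_Ico_right hz'.2.le))

theorem posetChi_congr {S T : Finset P} {σ τ : P → ℕ} {x y : P} (hy : y ∈ S)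
    (h : S ∩ Icc x y = T ∩ Icc x y) (hστ : Set.EqOn σ τ ↑(S ∩ Icc x y)) :
    posetChi S σ x y = posetChi T τ x y := by
  unfold posetChi
  rw [← h]
  refine sum_congr rfl fun z hz => ?_
  have hz' := mem_Icc.1 (mem_inter.1 hz).2
  have hyI : y ∈ S ∩ Icc x y := mem_inter.2 ⟨hy, mem_Icc.2 ⟨hz'.1.trans hz'.2, le_rfl⟩⟩
  rw [posetMu_congr (inter_eq_inter_of_subset h (Ico_subset_Icc_self.trans
    (Icc_subset_Icc_right hz'.2))), hστ hz, hστ hyI]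

theorem posetChibar_congr {S T : Finset P} {σ τ : P → ℕ} {x y : P} (hy : y ∈ S)
    (h : S ∩ Icc x y = T ∩ Icc x y) (hστ : Set.EqOn σ τ ↑(S ∩ Icc x y)) :
    posetChibar S σ x y = posetChibar T τ x y := by
  unfold posetChibar
  rw [posetChi_congr hy h hστ]

theorem posetChow_congr {S T : Finset P} {σ τ : P → ℕ} {x y : P}
    (h : S ∩ Icc x y = T ∩ Icc x y) (hστ : Set.EqOn σ τ ↑(S ∩ Icc x y)) :
    posetChow S σ x y = posetChow T τ x y := by
  induction x using WellFoundedGT.induction with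
  | _ x ih =>
    rcases eq_or_ne x y with rfl | hxy
    · rw [posetChow_self, posetChow_self]
    have hIoc : S ∩ Ioc x y = T ∩ Ioc x y := inter_eq_inter_of_subset h Ioc_subset_Icc_self
    rw [posetChow_of_ne S σ hxy, posetChow_of_ne T τ hxy, ← hIoc]
    refine sum_congr rfl fun z hz => ?_
    obtain ⟨hzS, hxz, hzy⟩ := mem_inter.1 hz |>.imp_right mem_Ioc.1
    rw [posetChibar_congr hzS (inter_eq_inter_of_subset h (Icc_subset_Icc_right hzy))
        (hστ.mono (by gcongr)),
      ih z hxz (inter_eq_inter_of_subset h (Icc_subset_Icc_left hxz.le)) (hστ.mono (by gcongr))]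

end Locality

section Vanishing

variable {S : Finset P} {σ : P → ℕ} {x y : P}

theorem posetMu_eq_zero_of_notMem (hx : x ∉ S) (hxy : x ≠ y) : posetMu S x y = 0 := by
  induction y using WellFoundedLT.induction with
  | _ y ih =>
    rw [posetMu_of_ne S hxy, neg_eq_zero]
    refine sum_eq_zero fun z hz => ?_
    obtain ⟨hzS, hz⟩ := mem_inter.1 hz
    exact ih z (mem_Ico.1 hz).2 (ne_of_mem_of_not_mem hzS hx).symm

theorem posetChi_eq_zero_of_notMem (hx : x ∉ S) : posetChi S σ x y = 0 := by
  refine sum_eq_zero fun z hz => ?_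
  rw [posetMu_eq_zero_of_notMem hx (ne_of_mem_of_not_mem (mem_inter.1 hz).1 hx).symm]
  simp

theorem posetChibar_eq_zero_of_notMem (hx : x ∉ S) (hxy : x ≠ y) : posetChibar S σ x y = 0 := by
  rw [posetChibar, if_neg hxy, posetChi_eq_zero_of_notMem hx, zero_divByMonic]

theorem posetChow_eq_zero_of_notMem (hx : x ∉ S) (hxy : x ≠ y) : posetChow S σ x y = 0 := by
  rw [posetChow_of_ne S σ hxy]
  refine sum_eq_zero fun z hz => ?_
  rw [posetChibar_eq_zero_of_notMem hx (mem_Ioc.1 (mem_inter.1 hz).2).1.ne, zero_mul]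

end Vanishing

section Inverse

variable {R : Type*} [CommRing R] (S : Finset P)

noncomputable def incidenceMatrix (f : P → P → R) : Matrix S S R :=
  fun u v => if (u : P) ≤ v then f u v else 0

theorem incidenceMatrix_mul_apply (f g : P → P → R) (u v : S) :
    (incidenceMatrix S f * incidenceMatrix S g) u v = ∑ z ∈ S ∩ Icc (u : P) v, f u z * g z v := by
  rw [Matrix.mul_apply, ← filter_mem_eq_inter, sum_filter, ← sum_coe_sort S]
  refine sum_congr rfl fun z _ => ?_
  simp only [incidenceMatrix, mem_Icc, ite_zero_mul_ite_zero]

/-- In the incidence algebra of `S`, a left inverse is also a right inverse. -/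
theorem sum_inter_Icc_mul_comm_eq_ite (f g : P → P → R)
    (h : ∀ x ∈ S, ∀ y ∈ S, x ≤ y → ∑ z ∈ S ∩ Icc x y, f x z * g z y = if x = y then 1 else 0)
    {x y : P} (hx : x ∈ S) (hy : y ∈ S) :
    ∑ z ∈ S ∩ Icc x y, g x z * f z y = if x = y then 1 else 0 := by
  have hfg : incidenceMatrix S f * incidenceMatrix S g = 1 := by
    ext u v
    rw [incidenceMatrix_mul_apply, Matrix.one_apply]
    by_cases huv : (u : P) ≤ v
    · rw [h u u.2 v v.2 huv]
      exact if_congr Subtype.ext_iff.symm rfl rfl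
    · rw [Icc_eq_empty huv, inter_empty, sum_empty, if_neg (by rintro rfl; exact huv le_rfl)]
  have hgf : incidenceMatrix S g * incidenceMatrix S f = 1 := mul_eq_one_comm.1 hfg
  have hxy := Matrix.ext_iff.2 hgf ⟨x, hx⟩ ⟨y, hy⟩
  rw [incidenceMatrix_mul_apply, Matrix.one_apply] at hxy
  simpa only [Subtype.mk.injEq] using hxy

end Inverse

section Mobius

variable {S : Finset P} {x y : P}

theorem sum_inter_Icc_posetMu_right (hy : y ∈ S) (hxy : x ≤ y) :
    ∑ z ∈ S ∩ Icc x y, posetMu S x z = if x = y then 1 else 0 := by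
  rw [sum_inter_Icc_eq_add_sum_inter_Ico _ hy hxy]
  rcases eq_or_ne x y with rfl | hne
  · simp [posetMu_self]
  · rw [posetMu_of_ne S hne, neg_add_cancel, if_neg hne]

theorem sum_inter_Icc_posetMu_left (hx : x ∈ S) (hy : y ∈ S) :
    ∑ z ∈ S ∩ Icc x y, posetMu S z y = if x = y then 1 else 0 := by
  simpa using sum_inter_Icc_mul_comm_eq_ite S (posetMu S) (fun _ _ => 1)
    (fun x _ y hy hxy => by simpa using sum_inter_Icc_posetMu_right hy hxy) hx hy

theorem sum_inter_Ico_C_posetMu_left (hx : x ∈ S) (hy : y ∈ S) (hxy : x < y) :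
    ∑ z ∈ S ∩ Ico x y, C (posetMu S z y : ℝ) = -1 := by
  have h := sum_inter_Icc_posetMu_left hx hy
  rw [sum_inter_Icc_eq_add_sum_inter_Ico _ hy hxy.le, posetMu_self, if_neg hxy.ne] at h
  rw [← map_sum, ← Int.cast_sum, eq_neg_of_add_eq_zero_right h]
  simp

end Mobius

section Chibar

variable {S : Finset P} {σ : P → ℕ} {x y : P}

theorem posetChi_isRoot_one (hy : y ∈ S) (hxy : x < y) : (posetChi S σ x y).IsRoot 1 := by
  have h := sum_inter_Icc_posetMu_right hy hxy.le
  rw [if_neg hxy.ne] at h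
  simp only [IsRoot, posetChi, eval_finsetSum, eval_mul, eval_C, eval_pow, eval_X, one_pow,
    mul_one]
  exact_mod_cast h

theorem X_sub_one_mul_posetChibar (hy : y ∈ S) (hxy : x < y) :
    (X - C 1) * posetChibar S σ x y = posetChi S σ x y := by
  rw [posetChibar, if_neg hxy.ne, mul_divByMonic_eq_iff_isRoot]
  exact posetChi_isRoot_one hy hxy

end Chibar

section RightRecursion

variable {S : Finset P} {σ : P → ℕ} {x y : P}

theorem sum_inter_Icc_neg_posetChibar_mul_posetChow (hx : x ∈ S) (hxy : x ≤ y) :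
    ∑ z ∈ S ∩ Icc x y, -posetChibar S σ x z * posetChow S σ z y = if x = y then 1 else 0 := by
  rw [sum_inter_Icc_eq_add_sum_inter_Ioc _ hx hxy, posetChibar_self]
  rcases eq_or_ne x y with rfl | hne
  · simp [posetChow_self]
  · simp only [posetChow_of_ne S σ hne, neg_mul, sum_neg_distrib, neg_neg, one_mul, if_neg hne]
    ring

theorem posetChow_eq_sum_inter_Ico (hy : y ∈ S) (hxy : x < y) :
    posetChow S σ x y = ∑ z ∈ S ∩ Ico x y, posetChow S σ x z * posetChibar S σ z y := by
  by_cases hx : x ∈ S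
  · have h := sum_inter_Icc_mul_comm_eq_ite S (fun x z => -posetChibar S σ x z) (posetChow S σ)
      (fun x hx _ _ hxy => sum_inter_Icc_neg_posetChibar_mul_posetChow hx hxy) hx hy
    rw [if_neg hxy.ne, sum_inter_Icc_eq_add_sum_inter_Ico _ hy hxy.le, posetChibar_self] at h
    simp only [mul_neg, neg_neg, mul_one, sum_neg_distrib] at h
    linear_combination h
  · rw [posetChow_eq_zero_of_notMem hx hxy.ne]
    refine (sum_eq_zero fun z hz => ?_).symm
    rw [posetChow_eq_zero_of_notMem hx (ne_of_mem_of_not_mem (mem_inter.1 hz).1 hx).symm, zero_mul]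

end RightRecursion

section Truncation

/-- When `σ` is a rank function, the elements of rank `σ y - 1` are the coatoms of `[x, y]`,
so `truncSet S σ x y` with the rank `truncRank σ y` is the truncation `τ([x, y])`. -/
noncomputable def truncSet (S : Finset P) (σ : P → ℕ) (x y : P) : Finset P :=
  (S ∩ Icc x y).filter fun w => σ w ≠ σ y - 1

def truncRank {α : Type*} (σ : α → ℕ) (y : α) : α → ℕ :=
  fun w => min (σ w) (σ y - 1)

theorem truncRank_of_lt {α : Type*} {σ : α → ℕ} {w y : α} (hσw : σ w < σ y) :
    truncRank σ y w = σ w :=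
  min_eq_left (by omega)

theorem truncRank_self {α : Type*} (σ : α → ℕ) (y : α) : truncRank σ y y = σ y - 1 :=
  min_eq_right (Nat.sub_le _ _)

theorem truncRank_truncRank {α : Type*} (σ : α → ℕ) (y : α) :
    truncRank (truncRank σ y) y = fun w => min (σ w) (σ y - 2) := by
  funext w
  rw [truncRank, truncRank_self, truncRank]
  omega

noncomputable def truncChow (S : Finset P) (σ : P → ℕ) (x y : P) : ℝ[X] :=
  posetChow (truncSet S σ x y) (truncRank σ y) x y

variable {S : Finset P} {σ : P → ℕ} {x y z w : P}

theorem truncSet_subset : truncSet S σ x y ⊆ S :=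
  fun _ hw => (mem_inter.1 (mem_filter.1 hw).1).1

theorem truncSet_inter_of_subset {I : Finset P} (hI : I ⊆ Icc x y) :
    truncSet S σ x y ∩ I = (S ∩ I).filter fun w => σ w ≠ σ y - 1 := by
  rw [truncSet, filter_inter, inter_assoc, inter_eq_right.2 hI]

theorem mem_truncSet_of_add_two_le (hw : w ∈ S) (hxw : x ≤ w) (hwy : w ≤ y)
    (hσw : σ w + 2 ≤ σ y) : w ∈ truncSet S σ x y :=
  mem_filter.2 ⟨mem_inter.2 ⟨hw, mem_Icc.2 ⟨hxw, hwy⟩⟩, by omega⟩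

theorem mem_truncSet_self (hy : y ∈ S) (hxy : x ≤ y) (hσy : 0 < σ y) : y ∈ truncSet S σ x y :=
  mem_filter.2 ⟨mem_inter.2 ⟨hy, mem_Icc.2 ⟨hxy, le_rfl⟩⟩, by omega⟩

theorem truncSet_truncSet (hσy : 2 ≤ σ y) :
    truncSet (truncSet S σ x y) (truncRank σ y) x y =
      (S ∩ Icc x y).filter fun w => σ w ≠ σ y - 1 ∧ σ w ≠ σ y - 2 := by
  have hQ : truncSet S σ x y ⊆ Icc x y := (filter_subset _ _).trans inter_subset_right
  rw [truncSet, inter_eq_left.2 hQ, truncSet, filter_filter]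
  refine filter_congr fun w _ => and_congr_right fun _ => ?_
  rw [truncRank_self, truncRank]
  omega

variable (hσ : StrictMonoOn σ S) (hy : y ∈ S)
include hσ hy

theorem add_two_le_of_mem_truncSet (hw : w ∈ truncSet S σ x y) (hwy : w < y) : σ w + 2 ≤ σ y := by
  have := hσ (truncSet_subset hw) hy hwy
  have := (mem_filter.1 hw).2
  omega

theorem truncSet_inter_Icc_of_lt (hw : w ∈ truncSet S σ x y) (hwy : w < y) :
    truncSet S σ x y ∩ Icc x w = S ∩ Icc x w := by
  refine subset_antisymm (inter_subset_inter_right truncSet_subset) fun u hu => ?_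
  obtain ⟨huS, hxu, huw⟩ := mem_inter.1 hu |>.imp_right mem_Icc.1
  have := hσ.monotoneOn huS (truncSet_subset hw) huw
  have := add_two_le_of_mem_truncSet hσ hy hw hwy
  exact mem_inter.2 ⟨mem_truncSet_of_add_two_le huS hxu (huw.trans hwy.le) (by omega),
    mem_Icc.2 ⟨hxu, huw⟩⟩

theorem eqOn_truncRank_of_lt (hw : w ∈ truncSet S σ x y) (hwy : w < y) :
    Set.EqOn (truncRank σ y) σ ↑(S ∩ Icc x w) := by
  intro u hu
  obtain ⟨huS, -, huw⟩ := mem_inter.1 hu |>.imp_right mem_Icc.1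
  exact truncRank_of_lt ((hσ.monotoneOn huS (truncSet_subset hw) huw).trans_lt
    (hσ (truncSet_subset hw) hy hwy))

theorem strictMonoOn_truncRank : StrictMonoOn (truncRank σ y) (truncSet S σ x y) := by
  intro u hu v hv huv
  have hvy := (mem_Icc.1 (mem_inter.1 (mem_filter.1 hv).1).2).2
  have := add_two_le_of_mem_truncSet hσ hy hu (huv.trans_le hvy)
  have := hσ (truncSet_subset hu) (truncSet_subset hv) huv
  simp only [truncRank]
  omega

end Truncation

section Chi

variable {S : Finset P} {σ : P → ℕ} {x y z : P}

theorem posetChi_eq_add_sum_inter_Ico (hy : y ∈ S) (hxy : x ≤ y) :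
    posetChi S σ x y =
      C (posetMu S x y : ℝ) + ∑ w ∈ S ∩ Ico x y, C (posetMu S x w : ℝ) * X ^ (σ y - σ w) := by
  rw [posetChi, sum_inter_Icc_eq_add_sum_inter_Ico _ hy hxy, Nat.sub_self, pow_zero, mul_one]

theorem C_posetMu_of_ne (hxy : x ≠ y) :
    C (posetMu S x y : ℝ) = -∑ w ∈ S ∩ Ico x y, C (posetMu S x w : ℝ) := by
  simp only [posetMu_of_ne S hxy, Int.cast_neg, Int.cast_sum, map_neg, map_sum]

/-- Removing the elements of rank `σ y - 1` from `[z, y]` moves their Möbius weight onto `y`,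
and every other term loses one factor `X`. -/
theorem X_mul_posetChi_truncSet (hσ : StrictMonoOn σ S) (hz : z ∈ S) (hy : y ∈ S)
    (hxz : x ≤ z) (hzy : z < y) :
    X * posetChi (truncSet S σ x y) (truncRank σ y) z y =
      posetChi S σ z y + (X - C 1) * C (posetMu S z y : ℝ) := by
  set Q := truncSet S σ x y
  set m : P → ℝ[X] := fun w => C (posetMu S z w : ℝ)
  set B := (S ∩ Ico z y).filter fun w => σ w ≠ σ y - 1
  set D := (S ∩ Ico z y).filter fun w => σ w = σ y - 1
  have hσzy := hσ hz hy hzy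
  have hyQ : y ∈ Q := mem_truncSet_self hy (hxz.trans hzy.le) (by omega)
  have hQ : Q ∩ Ico z y = B :=
    truncSet_inter_of_subset ((Ico_subset_Icc_self).trans (Icc_subset_Icc_left hxz))
  have hB : ∀ w ∈ B, posetMu Q z w = posetMu S z w ∧ σ w + 2 ≤ σ y := by
    intro w hw
    rw [← hQ] at hw
    obtain ⟨hwQ, hzw, hwy⟩ := mem_inter.1 hw |>.imp_right mem_Ico.1
    refine ⟨posetMu_congr ?_, add_two_le_of_mem_truncSet hσ hy hwQ hwy⟩
    exact inter_eq_inter_of_subset (truncSet_inter_Icc_of_lt hσ hy hwQ hwy)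
      (Ico_subset_Icc_self.trans (Icc_subset_Icc_left hxz))
  have hχQ : posetChi Q (truncRank σ y) z y =
      -(∑ w ∈ B, m w) + ∑ w ∈ B, m w * X ^ (σ y - 1 - σ w) := by
    rw [posetChi_eq_add_sum_inter_Ico hyQ hzy.le, C_posetMu_of_ne hzy.ne, hQ]
    congr 1
    · exact congrArg _ (sum_congr rfl fun w hw => by rw [(hB w hw).1])
    · refine sum_congr rfl fun w hw => ?_
      rw [(hB w hw).1, truncRank_self, truncRank_of_lt (by have := (hB w hw).2; omega)]
  have hχS : posetChi S σ z y = m y + (∑ w ∈ D, m w) * X + ∑ w ∈ B, m w * X ^ (σ y - σ w) := by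
    rw [posetChi_eq_add_sum_inter_Ico hy hzy.le, add_assoc, sum_mul,
      ← sum_filter_add_sum_filter_not (S ∩ Ico z y) fun w => σ w = σ y - 1]
    congr 2
    refine sum_congr rfl fun w hw => ?_
    rw [show σ y - σ w = 1 by have := (mem_filter.1 hw).2; omega, pow_one]
  have hmy : m y = -(∑ w ∈ D, m w + ∑ w ∈ B, m w) := by
    show C _ = _
    rw [C_posetMu_of_ne hzy.ne, sum_filter_add_sum_filter_not]
  have hpow : ∑ w ∈ B, m w * X ^ (σ y - σ w) = X * ∑ w ∈ B, m w * X ^ (σ y - 1 - σ w) := by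
    rw [mul_sum]
    refine sum_congr rfl fun w hw => ?_
    rw [show σ y - σ w = σ y - 1 - σ w + 1 by have := (hB w hw).2; omega, pow_succ]
    ring
  rw [hχQ, hχS, hpow, show C (posetMu S z y : ℝ) = m y from rfl, hmy, map_one]
  ring

end Chi

section TruncationFormula

variable {S : Finset P} {σ : P → ℕ} {x y z w : P}

theorem posetChibar_eq_X_mul_posetChibar_truncSet (hσ : StrictMonoOn σ S) (hz : z ∈ S)
    (hy : y ∈ S) (hxz : x ≤ z) (hzy : z < y) :
    posetChibar S σ z y =
      X * posetChibar (truncSet S σ x y) (truncRank σ y) z y - C (posetMu S z y : ℝ) := by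
  have hyQ : y ∈ truncSet S σ x y :=
    mem_truncSet_self hy (hxz.trans hzy.le) (Nat.zero_lt_of_lt (hσ hz hy hzy))
  refine mul_left_cancel₀ (X_sub_C_ne_zero 1) ?_
  rw [X_sub_one_mul_posetChibar hy hzy, mul_sub, mul_left_comm,
    X_sub_one_mul_posetChibar hyQ hzy, X_mul_posetChi_truncSet hσ hz hy hxz hzy]
  ring

theorem truncChow_congr {T : Finset P} {τ : P → ℕ} (hw : w ∈ S) (hxw : x ≤ w)
    (h : S ∩ Icc x w = T ∩ Icc x w) (hστ : Set.EqOn σ τ ↑(S ∩ Icc x w)) :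
    truncChow S σ x w = truncChow T τ x w := by
  have hwI : w ∈ S ∩ Icc x w := mem_inter.2 ⟨hw, mem_Icc.2 ⟨hxw, le_rfl⟩⟩
  have hset : truncSet S σ x w = truncSet T τ x w := by
    rw [truncSet, truncSet, ← h]
    exact filter_congr fun u hu => by rw [hστ hu, hστ hwI]
  rw [truncChow, truncChow, hset]
  refine posetChow_congr rfl fun u hu => ?_
  have hu' : u ∈ S ∩ Icc x w := h ▸ (mem_filter.1 (mem_inter.1 hu).1).1
  simp only [truncRank, hστ hu', hστ hwI]

theorem sum_inter_Ico_posetChow_mul_posetChibar_truncSet (hσ : StrictMonoOn σ S) (hx : x ∈ S)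
    (hy : y ∈ S) (hxy : x < y) :
    ∑ z ∈ S ∩ Ico x y, posetChow S σ x z * posetChibar (truncSet S σ x y) (truncRank σ y) z y =
      truncChow S σ x y := by
  set Q := truncSet S σ x y
  have hyQ : y ∈ Q := mem_truncSet_self hy hxy.le (Nat.zero_lt_of_lt (hσ hx hy hxy))
  have hQS : Q ∩ Ico x y ⊆ S ∩ Ico x y := inter_subset_inter_right truncSet_subset
  rw [truncChow, posetChow_eq_sum_inter_Ico hyQ hxy, ← sum_subset hQS fun z hz hzQ => ?_]
  · refine sum_congr rfl fun z hz => ?_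
    obtain ⟨hzQ, -, hzy⟩ := mem_inter.1 hz |>.imp_right mem_Ico.1
    rw [posetChow_congr (truncSet_inter_Icc_of_lt hσ hy hzQ hzy).symm
      (eqOn_truncRank_of_lt hσ hy hzQ hzy).symm]
  · have hzQ' : z ∉ Q := fun h => hzQ (mem_inter.2 ⟨h, (mem_inter.1 hz).2⟩)
    rw [posetChibar_eq_zero_of_notMem hzQ' (mem_Ico.1 (mem_inter.1 hz).2).2.ne, mul_zero]

theorem sum_inter_Ico_one_add_X_mul_sum_mul_posetMu (F : P → ℝ[X]) (hx : x ∈ S) (hy : y ∈ S)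
    (hxy : x < y) :
    ∑ z ∈ S ∩ Ico x y, (1 + X * ∑ w ∈ S ∩ Ioc x z, F w) * C (posetMu S z y : ℝ) =
      -1 - X * ∑ w ∈ S ∩ Ioo x y, F w := by
  have hswap : ∑ z ∈ S ∩ Ico x y, ∑ w ∈ S ∩ Ioc x z, F w * C (posetMu S z y : ℝ) =
      ∑ w ∈ S ∩ Ioo x y, ∑ z ∈ S ∩ Ico w y, F w * C (posetMu S z y : ℝ) := by
    refine sum_comm' fun z w => ?_
    simp only [mem_inter, mem_Ico, mem_Ioc, mem_Ioo]
    grind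
  have hinner : ∀ w ∈ S ∩ Ioo x y, ∑ z ∈ S ∩ Ico w y, F w * C (posetMu S z y : ℝ) = -F w := by
    intro w hw
    obtain ⟨hwS, -, hwy⟩ := mem_inter.1 hw |>.imp_right mem_Ioo.1
    rw [← mul_sum, sum_inter_Ico_C_posetMu_left hwS hy hwy, mul_neg_one]
  simp only [add_mul, one_mul, sum_add_distrib, mul_assoc, ← mul_sum, sum_mul]
  rw [sum_inter_Ico_C_posetMu_left hx hy hxy, hswap, sum_congr rfl hinner, sum_neg_distrib]
  ring

theorem posetChow_eq_one_add_X_mul_sum_truncChow (hσ : StrictMonoOn σ S) (hx : x ∈ S)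
    (hy : y ∈ S) (hxy : x ≤ y) :
    posetChow S σ x y = 1 + X * ∑ w ∈ S ∩ Ioc x y, truncChow S σ x w := by
  induction y using WellFoundedLT.induction with
  | _ y ih =>
    rcases hxy.eq_or_lt with rfl | hxy
    · simp [posetChow_self]
    have hsplit : ∀ z ∈ S ∩ Ico x y, posetChow S σ x z * posetChibar S σ z y =
        X * (posetChow S σ x z * posetChibar (truncSet S σ x y) (truncRank σ y) z y) -
          (1 + X * ∑ w ∈ S ∩ Ioc x z, truncChow S σ x w) * C (posetMu S z y : ℝ) := by
      intro z hz
      obtain ⟨hzS, hxz, hzy⟩ := mem_inter.1 hz |>.imp_right mem_Ico.1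
      rw [posetChibar_eq_X_mul_posetChibar_truncSet hσ hzS hy hxz hzy, ← ih z hzy hzS hxz]
      ring
    rw [posetChow_eq_sum_inter_Ico hy hxy, sum_congr rfl hsplit, sum_sub_distrib, ← mul_sum,
      sum_inter_Ico_posetChow_mul_posetChibar_truncSet hσ hx hy hxy,
      sum_inter_Ico_one_add_X_mul_sum_mul_posetMu _ hx hy hxy,
      sum_inter_Ioc_eq_add_sum_inter_Ioo _ hy hxy]
    ring

end TruncationFormula

section DoubleTruncation

variable {S : Finset P} {σ : P → ℕ} {x y w : P}

theorem truncChow_truncSet_of_lt (hσ : StrictMonoOn σ S) (hy : y ∈ S)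
    (hw : w ∈ truncSet S σ x y) (hwy : w < y) :
    truncChow (truncSet S σ x y) (truncRank σ y) x w = truncChow S σ x w :=
  truncChow_congr hw (mem_Icc.1 (mem_inter.1 (mem_filter.1 hw).1).2).1
    (truncSet_inter_Icc_of_lt hσ hy hw hwy)
    (by rw [truncSet_inter_Icc_of_lt hσ hy hw hwy]; exact eqOn_truncRank_of_lt hσ hy hw hwy)

theorem posetChow_eq_double_truncation (hσ : StrictMonoOn σ S) (hx : x ∈ S) (hy : y ∈ S)
    (hxy : x < y) (hσxy : σ x + 2 ≤ σ y) :
    posetChow S σ x y =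
      (1 + X) * truncChow S σ x y - X * truncChow (truncSet S σ x y) (truncRank σ y) x y +
        X * ∑ w ∈ (S ∩ Ioo x y).filter (fun w => σ w = σ y - 1), truncChow S σ x w := by
  have hxQ := mem_truncSet_of_add_two_le hx le_rfl hxy.le hσxy
  have hyQ := mem_truncSet_self hy hxy.le (by omega : 0 < σ y)
  have e1 := posetChow_eq_one_add_X_mul_sum_truncChow hσ hx hy hxy.le
  have e2 := posetChow_eq_one_add_X_mul_sum_truncChow (strictMonoOn_truncRank hσ hy) hxQ hyQ hxy.le
  rw [sum_inter_Ioc_eq_add_sum_inter_Ioo _ hy hxy,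
    ← sum_filter_add_sum_filter_not (S ∩ Ioo x y) fun w => σ w = σ y - 1] at e1
  have hlower : ∀ w ∈ truncSet S σ x y ∩ Ioo x y,
      truncChow (truncSet S σ x y) (truncRank σ y) x w = truncChow S σ x w := fun w hw =>
    truncChow_truncSet_of_lt hσ hy (mem_inter.1 hw).1 (mem_Ioo.1 (mem_inter.1 hw).2).2
  rw [sum_inter_Ioc_eq_add_sum_inter_Ioo _ hyQ hxy, sum_congr rfl hlower,
    truncSet_inter_of_subset Ioo_subset_Icc_self] at e2
  change truncChow S σ x y = _ at e2
  linear_combination e1 - e2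

end DoubleTruncation

theorem IsRankFn.strictMono [BoundedOrder P] {ρ : P → ℕ} (hρ : IsRankFn ρ) : StrictMono ρ :=
  (strictMono_iff_forall_covBy ρ).2 fun a b h => by rw [hρ.2 a b h]; exact Nat.lt_succ_self _

/-- For a finite bounded graded poset `P` of rank `r ≥ 2`,
`H_P = (1+t)·H_{τ(P)} - t·H_{τ²(P)} + t·∑_{ρ(x)=r-1} H_{τ([0̂,x])}`. -/
theorem chow_double_truncation_formula
    {P : Type*} [PartialOrder P] [Fintype P] [BoundedOrder P]
    (ρ : P → ℕ) (hρ : IsRankFn ρ) (r : ℕ) (hr : ρ (⊤ : P) = r) (h2 : 2 ≤ r) :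
    posetChow (Finset.univ : Finset P) ρ ⊥ ⊤ =
      (1 + X) * posetChow (Finset.univ.filter (fun z : P => ρ z ≠ r - 1))
          (fun z => min (ρ z) (r - 1)) ⊥ ⊤
        - X * posetChow (Finset.univ.filter (fun z : P => ρ z ≠ r - 1 ∧ ρ z ≠ r - 2))
            (fun z => min (ρ z) (r - 2)) ⊥ ⊤
        + X * ∑ x ∈ Finset.univ.filter (fun x : P => ρ x = r - 1),
            posetChow ((Finset.Icc ⊥ x).filter (fun z => ρ z ≠ ρ x - 1))
              (fun z => min (ρ z) (ρ x - 1)) ⊥ x := by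
  have hbot : ρ ⊥ = 0 := hρ.1
  have hbt : (⊥ : P) < ⊤ := bot_le.lt_of_ne fun h => by rw [← h] at hr; omega
  have hcoatoms : (univ ∩ Ioo ⊥ ⊤).filter (fun w => ρ w = ρ ⊤ - 1) =
      univ.filter fun w => ρ w = r - 1 := by
    ext w
    simp only [univ_inter, mem_filter, mem_Ioo, mem_univ, true_and, hr, and_iff_right_iff_imp]
    intro hw
    exact ⟨bot_lt_iff_ne_bot.2 (by rintro rfl; omega), lt_top_iff_ne_top.2 (by rintro rfl; omega)⟩
  rw [posetChow_eq_double_truncation (hρ.strictMono.strictMonoOn _) (mem_univ _) (mem_univ _) hbt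
    (by omega), hcoatoms]
  unfold truncChow
  rw [truncSet_truncSet (by omega), truncRank_truncRank]
  unfold truncSet truncRank
  simp only [univ_inter, Icc_bot_top, hr]
end
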